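/- If a distributed history H with a finite set of update events admits a linearization (a sequential ordering of all its events extending the program order) of the events excluding some finite set of queries that is recognized by the sequential specification of the abstract data type, then H is eventually consistent: there exists a state s such that only finitely many query events return a value different from the output function applied to s. -/

import Mathlib

/-- An update-query abstract data type. -/
structure UQADT (U Qi Qo S : Type*) where
  s0 : S
  T : S → U → S
  G : S → Qi → Qo

/-- A distributed history: events labelled by updates or queries, with a program order. -/
structure Hist (U Qi Qo E : Type*) where
  lab : E → U ⊕ (Qi × Qo)
  po : E → E → Prop

variable {U Qi Qo S E : Type*}

def Hist.upd (h : Hist U Qi Qo E) : Set E := {e | ∃ u, h.lab e = Sum.inl u}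
def Hist.qry (h : Hist U Qi Qo E) : Set E := {e | ∃ q, h.lab e = Sum.inr q}

/-- `w` is an enumeration (an initial segment of `ℕ`, possibly finite) of the
set `F` of events, compatible with the relation `r`. -/
def IsLinz (r : E → E → Prop) (F : Set E) (w : ℕ → Option E) : Prop :=
  (∀ i j a, w i = some a → w j = some a → i = j) ∧
  (∀ a ∈ F, ∃ i, w i = some a) ∧
  (∀ i a, w i = some a → a ∈ F) ∧
  (∀ i j a b, i < j → w i = some a → w j = some b → ¬ r b a) ∧
  (∀ i j, i ≤ j → w j ≠ none → w i ≠ none)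

/-- The sequential word read off along `w` is recognized by `O`. -/
def Recog (O : UQADT U Qi Qo S) (h : Hist U Qi Qo E) (w : ℕ → Option E) : Prop :=
  ∃ st : ℕ → S, st 0 = O.s0 ∧ ∀ i,
    match w i with
    | none => st (i+1) = st i
    | some e =>
      match h.lab e with
      | Sum.inl u => st (i+1) = O.T (st i) u
      | Sum.inr (qi, qo) => st (i+1) = st i ∧ O.G (st i) qi = qo

/-- Eventual consistency. -/
def EC (O : UQADT U Qi Qo S) (h : Hist U Qi Qo E) : Prop :=
  h.upd.Infinite ∨ ∃ s : S,
    {e : E | ∃ qi qo, h.lab e = Sum.inr (qi, qo) ∧ O.G s qi ≠ qo}.Finite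

/-- Update consistency. -/
def UC (O : UQADT U Qi Qo S) (h : Hist U Qi Qo E) : Prop :=
  h.upd.Infinite ∨ ∃ Q' : Set E, Q' ⊆ h.qry ∧ Q'.Finite ∧
    ∃ w, IsLinz h.po Q'ᶜ w ∧ Recog O h w

/-- A reflexive relation is acyclic if its strict part has no cycles. -/
def Acyclic (r : E → E → Prop) : Prop :=
  ∀ e, ¬ Relation.TransGen (fun a b => r a b ∧ a ≠ b) e e

/-- Strong update consistency. -/
def SUC (O : UQADT U Qi Qo S) (h : Hist U Qi Qo E) : Prop :=
  ∃ vis le : E → E → Prop,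
    (∀ e, vis e e) ∧ Acyclic vis ∧
    (∀ e e', h.po e e' → vis e e') ∧
    (∀ u ∈ h.upd, {e | ¬ vis u e}.Finite) ∧
    (∀ e e' e'', vis e e' → h.po e' e'' → vis e e'') ∧
    IsLinearOrder E le ∧ (∀ e e', vis e e' → le e e') ∧
    (∀ q ∈ h.qry, ∃ w,
      IsLinz (fun a b => le a b ∧ a ≠ b) ({u | u ∈ h.upd ∧ vis u q} ∪ {q}) w ∧
      Recog O h w)

/-- Strong eventual consistency. -/
def SEC (O : UQADT U Qi Qo S) (h : Hist U Qi Qo E) : Prop :=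
  ∃ vis : E → E → Prop,
    (∀ e, vis e e) ∧ Acyclic vis ∧
    (∀ e e', h.po e e' → vis e e') ∧
    (∀ u ∈ h.upd, {e | ¬ vis u e}.Finite) ∧
    (∀ e e' e'', vis e e' → h.po e' e'' → vis e e'') ∧
    ∀ V ⊆ h.upd, ∃ s : S, ∀ e qi qo, h.lab e = Sum.inr (qi, qo) →
      {u | u ∈ h.upd ∧ vis u e} = V → O.G s qi = qo

/-!
Past the last position of an update in `w`, the run of the state machine stays in one state `s`,
and every query placed there is answered by `O.G s`. The remaining queries lie in `Q'` or at the
finitely many earlier positions.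
-/

/- `Recog O h w` unfolds to `∃ st, st 0 = O.s0 ∧ IsRun O h w st`. -/
def IsRun (O : UQADT U Qi Qo S) (h : Hist U Qi Qo E) (w : ℕ → Option E) (st : ℕ → S) :
    Prop :=
  ∀ i,
    match w i with
    | none => st (i+1) = st i
    | some e =>
      match h.lab e with
      | Sum.inl u => st (i+1) = O.T (st i) u
      | Sum.inr (qi, qo) => st (i+1) = st i ∧ O.G (st i) qi = qo

namespace IsRun

variable {O : UQADT U Qi Qo S} {h : Hist U Qi Qo E} {w : ℕ → Option E} {st : ℕ → S}

theorem succ_eq_of_not_upd (hrun : IsRun O h w st) {i : ℕ}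
    (hi : ∀ e, w i = some e → e ∉ h.upd) : st (i + 1) = st i := by
  have hs := hrun i
  cases hw : w i with
  | none => simpa only [hw] using hs
  | some e =>
    cases hl : h.lab e with
    | inl u => exact absurd ⟨u, hl⟩ (hi e hw)
    | inr q =>
      simp only [hw, hl] at hs
      exact hs.1

theorem eq_of_le (hrun : IsRun O h w st) {N : ℕ}
    (hN : ∀ i, N ≤ i → ∀ e, w i = some e → e ∉ h.upd) {i : ℕ} (hi : N ≤ i) :
    st i = st N := by
  induction i, hi using Nat.le_induction with
  | base => rfl
  | succ i hi ih => rw [hrun.succ_eq_of_not_upd (hN i hi), ih]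

theorem query_eq (hrun : IsRun O h w st) {i : ℕ} {e : E} {qi : Qi} {qo : Qo}
    (hw : w i = some e) (hl : h.lab e = Sum.inr (qi, qo)) : O.G (st i) qi = qo := by
  have hs := hrun i
  simp only [hw, hl] at hs
  exact hs.2

end IsRun

theorem exists_bound_of_injective_positions {w : ℕ → Option E}
    (hinj : ∀ i j a, w i = some a → w j = some a → i = j) {A : Set E} (hA : A.Finite) :
    ∃ N, ∀ i, N ≤ i → ∀ e, w i = some e → e ∉ A := by
  have hpos : {i | ∃ e ∈ A, w i = some e}.Finite := by
    refine (hA.biUnion fun e _ => ?_).subset fun i ⟨e, he, hw⟩ => Set.mem_biUnion he hw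
    exact Set.Subsingleton.finite fun i hi j hj => hinj i j e hi hj
  obtain ⟨N, hN⟩ := hpos.bddAbove
  exact ⟨N + 1, fun i hi e hw he => by have := hN ⟨e, he, hw⟩; omega⟩

theorem finite_setOf_lt_positions (w : ℕ → Option E) (N : ℕ) :
    {e | ∃ i < N, w i = some e}.Finite :=
  ((Set.finite_lt_nat N).image w).preimage (Option.some_injective E).injOn
    |>.subset fun _ ⟨i, hi, hw⟩ => ⟨i, hi, hw⟩

theorem stmt0_general (O : UQADT U Qi Qo S) (h : Hist U Qi Qo E)
    (hUfin : h.upd.Finite)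
    (Q' : Set E) (hQ'fin : Q'.Finite)
    (w : ℕ → Option E) (hlin : IsLinz h.po Q'ᶜ w) (hrec : Recog O h w) :
    ∃ s : S, {e : E | ∃ qi qo, h.lab e = Sum.inr (qi, qo) ∧ O.G s qi ≠ qo}.Finite := by
  obtain ⟨hinj, hsurj, -⟩ := hlin
  obtain ⟨st, -, hrun : IsRun O h w st⟩ := hrec
  obtain ⟨N, hN⟩ := exists_bound_of_injective_positions hinj hUfin
  refine ⟨st N, (hQ'fin.union (finite_setOf_lt_positions w N)).subset ?_⟩
  rintro e ⟨qi, qo, hl, hne⟩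
  by_cases hQ : e ∈ Q'
  · exact Or.inl hQ
  obtain ⟨i, hwi⟩ := hsurj e hQ
  refine Or.inr ⟨i, lt_of_not_ge fun hi => hne ?_, hwi⟩
  rw [← hrun.eq_of_le hN hi]
  exact hrun.query_eq hwi hl

/-- if a history with finitely many updates admits a linearization
of all events except a finite set of queries that is recognized by the
specification, then it is eventually consistent. -/
theorem stmt0 (O : UQADT U Qi Qo S) (h : Hist U Qi Qo E)
    (hord : IsStrictOrder E h.po) (hpred : ∀ e : E, {e' | h.po e' e}.Finite)
    (hUfin : h.upd.Finite)
    (Q' : Set E) (hQ'sub : Q' ⊆ h.qry) (hQ'fin : Q'.Finite)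
    (w : ℕ → Option E) (hlin : IsLinz h.po Q'ᶜ w) (hrec : Recog O h w) :
    ∃ s : S, {e : E | ∃ qi qo, h.lab e = Sum.inr (qi, qo) ∧ O.G s qi ≠ qo}.Finite :=
  stmt0_general O h hUfin Q' hQ'fin w hlin hrec
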